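/- arXiv:1809.05005 — 3 statements merged into one kernel-verified Lean document; each statement's English description precedes it below -/
import Mathlib

section
/- Let (X, σ_X) and (Y, σ_Y) be topologically mixing countable Markov shifts and let π : X → Y be a one-block factor map such that |π^{-1}(n)| < ∞ for every symbol n ∈ ℕ. Then the Gurevich entropies satisfy h_G(σ_X) ≥ h_G(σ_Y), where for a countable Markov shift Z, h_G(σ_Z) = sup{ h(σ_Z|_K) : K ⊂ Z compact and invariant } = sup{ h(σ_Z|_{Σ_K}) : Σ_K ⊂ Z a topologically mixing finite Markov shift }, h denoting topological entropy. -/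
open Filter Topology MeasureTheory
open scoped ENNReal

namespace CSS

/-- The full shift space over the countable alphabet `ℕ`. -/
abbrev FullShift : Type := ℕ → ℕ

/-- The (one-sided) shift map. -/
def shift : FullShift → FullShift := fun x n => x (n + 1)

/-- The cylinder set determined by a word. -/
def cyl (w : List ℕ) : Set FullShift := {x | ∀ i : Fin w.length, x i.1 = w.get i}

/-- A subshift on a countable alphabet: a closed, shift-invariant subset of the full shift. -/
def IsSubshift (X : Set FullShift) : Prop := IsClosed X ∧ shift '' X ⊆ X

/-- The word `w` is allowable for `X` (the cylinder of `w` meets `X`). -/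
def Allow (X : Set FullShift) (w : List ℕ) : Prop := ∃ x ∈ X, x ∈ cyl w

/-- A word is allowed by a transition matrix `t`. -/
def WordAllowed (t : ℕ → ℕ → Prop) (w : List ℕ) : Prop :=
  ∀ i : ℕ, ∀ h : i + 1 < w.length, t (w.get ⟨i, Nat.lt_of_succ_lt h⟩) (w.get ⟨i + 1, h⟩)

/-- The countable Markov shift determined by the transition matrix `t`. -/
def markov (t : ℕ → ℕ → Prop) : Set FullShift := {x | ∀ n, t (x n) (x (n + 1))}

/-- The transition matrix has no row and no column made entirely of zeros. -/
def NoZeroRowCol (t : ℕ → ℕ → Prop) : Prop := (∀ i, ∃ j, t i j) ∧ (∀ j, ∃ i, t i j)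

/-- The Markov shift of `t` restricted to the symbols `< N`. -/
def markovRestr (t : ℕ → ℕ → Prop) (N : ℕ) : Set FullShift :=
  {x | (∀ n, t (x n) (x (n + 1))) ∧ ∀ n, x n < N}

/-- The restriction of `t` to the symbols `< N` is an irreducible matrix. -/
def MatIrred (t : ℕ → ℕ → Prop) (N : ℕ) : Prop :=
  ∀ i < N, ∀ j < N, ∃ w : List ℕ, (∀ a ∈ w, a < N) ∧ WordAllowed t ([i] ++ w ++ [j])

/-- A subshift is irreducible. -/
def Irreducible (X : Set FullShift) : Prop :=
  ∀ u v, Allow X u → Allow X v → ∃ w, Allow X (u ++ w ++ v)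

/-- The weak specification property. -/
def WeakSpec (X : Set FullShift) : Prop :=
  ∃ p : ℕ, ∀ u v, Allow X u → Allow X v → ∃ w, w.length ≤ p ∧ Allow X (u ++ w ++ v)

/-- A subshift is finitely irreducible. -/
def FinIrreducible (X : Set FullShift) : Prop :=
  ∃ (p : ℕ) (W : Finset (List ℕ)), (∀ w ∈ W, w.length ≤ p ∧ Allow X w) ∧
    ∀ u v, Allow X u → Allow X v → ∃ w ∈ W, Allow X (u ++ w ++ v)

/-- A countable Markov shift (given by its matrix) is topologically mixing. -/
def TopMixingT (t : ℕ → ℕ → Prop) : Prop :=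
  ∀ a b : ℕ, ∃ N : ℕ, ∀ n > N, ∃ w : List ℕ, w.length = n ∧ WordAllowed t w ∧
    w.head? = some a ∧ w.getLast? = some b

/-- The big images and preimages property. -/
def BIP (t : ℕ → ℕ → Prop) : Prop :=
  ∃ S : Finset ℕ, ∀ a : ℕ, (∃ b ∈ S, t b a) ∧ (∃ b ∈ S, t a b)

/-- A countable Markov shift (given by its matrix) is finitely primitive. -/
def FinPrimitiveT (t : ℕ → ℕ → Prop) : Prop :=
  ∃ (p : ℕ) (W : Finset (List ℕ)), (∀ w ∈ W, w.length = p ∧ WordAllowed t w) ∧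
    ∀ u v, WordAllowed t u → WordAllowed t v → ∃ w ∈ W, WordAllowed t (u ++ w ++ v)

/-- The one-block code induced by a map on symbols. -/
def oneBlock (φ : ℕ → ℕ) : FullShift → FullShift := fun x n => φ (x n)

/-- The word given by the first `n` symbols of `x`. -/
def prefixWord (x : FullShift) (n : ℕ) : List ℕ := List.ofFn (fun i : Fin n => x i.1)

/-- The number of allowable words of `X` mapping to the word `v` under the one-block code. -/
noncomputable def preCount (X : Set FullShift) (φ : ℕ → ℕ) (v : List ℕ) : ℕ :=
  Set.ncard {u : List ℕ | Allow X u ∧ u.map φ = v}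

/-- The sequence Φ = {log φ_n}, φ_n(y) = |π⁻¹(y₁…y_n)|. -/
noncomputable def phiSeq (X : Set FullShift) (φ : ℕ → ℕ) : ℕ → FullShift → ℝ :=
  fun n y => (preCount X φ (prefixWord y n) : ℝ)

variable (X : Set FullShift) (f : ℕ → FullShift → ℝ)

/-- Each function of the sequence is positive on `X`. -/
def SeqPos : Prop := ∀ n, 0 < n → ∀ x ∈ X, 0 < f n x

/-- Each function of the sequence is continuous on `X`. -/
def SeqCont : Prop := ∀ n, 0 < n → ContinuousOn (f n) X

/-- `sup {f_{|w|}(x) : x ∈ [w] ∩ X}`. -/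
noncomputable def supW (w : List ℕ) : ℝ := sSup (f w.length '' (X ∩ cyl w))

/-- `sup {log f_{|w|}(x) : x ∈ [w] ∩ X}`. -/
noncomputable def supLogW (w : List ℕ) : ℝ :=
  sSup ((fun x => Real.log (f w.length x)) '' (X ∩ cyl w))

/-- The `n`-th variation of the sequence is bounded by `M`. -/
def VarBddBy (n : ℕ) (M : ℝ) : Prop :=
  ∀ x ∈ X, ∀ y ∈ X, (∀ i < n, x i = y i) → f n x ≤ M * f n y

/-- Bowen sequence with constant `M`. -/
def BowenWith (M : ℝ) : Prop := ∀ n, 0 < n → VarBddBy X f n M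

/-- Bowen sequence. -/
def Bowen : Prop := ∃ M : ℝ, 0 < M ∧ BowenWith X f M

/-- Tempered variation with variation constants `Mseq`. -/
def TemperedWith (Mseq : ℕ → ℝ) : Prop :=
  (∀ n, 0 < n → 0 < Mseq n ∧ VarBddBy X f n (Mseq n)) ∧
  Tendsto (fun n : ℕ => Real.log (Mseq n) / (n : ℝ)) atTop (𝓝 0)

/-- Tempered variation. -/
def Tempered : Prop := ∃ Mseq : ℕ → ℝ, TemperedWith X f Mseq

/-- `F + C` is sub-additive: `f_{n+m}(x) ≤ e^C f_n(x) f_m(σ^n x)`. -/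
def SubAddWith (C : ℝ) : Prop :=
  ∀ n m, 0 < n → 0 < m → ∀ x ∈ X, f (n + m) x ≤ Real.exp C * (f n x * f m (shift^[n] x))

/-- Condition (C1). -/
def CondC1 : Prop := ∃ C : ℝ, 0 ≤ C ∧ SubAddWith X f C

/-- Almost-additivity with constant `C`. -/
def AlmostAddWith (C : ℝ) : Prop :=
  ∀ n m, 0 < n → 0 < m → ∀ x ∈ X,
    Real.exp (-C) * (f n x * f m (shift^[n] x)) ≤ f (n + m) x ∧
    f (n + m) x ≤ Real.exp C * (f n x * f m (shift^[n] x))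

/-- Almost-additive sequence. -/
def AlmostAdd : Prop := ∃ C : ℝ, 0 ≤ C ∧ AlmostAddWith X f C

/-- Condition (C2) with constants `D`, `p`. -/
def C2With (D : ℝ) (p : ℕ) : Prop :=
  ∀ u v : List ℕ, 0 < u.length → 0 < v.length → Allow X u → Allow X v →
    ∃ w : List ℕ, w.length ≤ p ∧ Allow X (u ++ w ++ v) ∧
      D * (supW X f u * supW X f v) ≤ supW X f (u ++ w ++ v)

/-- Condition (C2). -/
def CondC2 : Prop := ∃ D : ℝ, 0 < D ∧ ∃ p : ℕ, C2With X f D p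

/-- Condition (C2) with all connecting words of length exactly `p` (strong specification). -/
def C2StrongWith (D : ℝ) (p : ℕ) : Prop :=
  ∀ u v : List ℕ, 0 < u.length → 0 < v.length → Allow X u → Allow X v →
    ∃ w : List ℕ, w.length = p ∧ Allow X (u ++ w ++ v) ∧
      D * (supW X f u * supW X f v) ≤ supW X f (u ++ w ++ v)

/-- Condition (C3): a finite set `W` of connecting words realizing (C2). -/
def C3With (D : ℝ) (p : ℕ) (W : Finset (List ℕ)) : Prop :=
  (∀ w ∈ W, w.length ≤ p) ∧
  ∀ u v : List ℕ, 0 < u.length → 0 < v.length → Allow X u → Allow X v →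
    ∃ w ∈ W, Allow X (u ++ w ++ v) ∧
      D * (supW X f u * supW X f v) ≤ supW X f (u ++ w ++ v)

/-- Condition (C3). -/
def CondC3 : Prop := ∃ D : ℝ, 0 < D ∧ ∃ (p : ℕ) (W : Finset (List ℕ)), C3With X f D p W

/-- The constants `D_{n,m}` are subexponential in each variable. -/
def TemperedConsts (Dnm : ℕ → ℕ → ℝ) : Prop :=
  (∀ n m, 0 < Dnm n m) ∧
  (∀ m, Tendsto (fun n : ℕ => Real.log (Dnm n m) / (n : ℝ)) atTop (𝓝 0)) ∧
  (∀ n, Tendsto (fun m : ℕ => Real.log (Dnm n m) / (m : ℝ)) atTop (𝓝 0))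

/-- Condition (D2) with constants `D_{n,m}` and `p`. -/
def D2With (Dnm : ℕ → ℕ → ℝ) (p : ℕ) : Prop :=
  TemperedConsts Dnm ∧
  ∀ u v : List ℕ, 0 < u.length → 0 < v.length → Allow X u → Allow X v →
    ∃ w : List ℕ, w.length ≤ p ∧ Allow X (u ++ w ++ v) ∧
      Dnm u.length v.length * (supW X f u * supW X f v) ≤ supW X f (u ++ w ++ v)

/-- Condition (D2). -/
def CondD2 : Prop := ∃ (Dnm : ℕ → ℕ → ℝ) (p : ℕ), D2With X f Dnm p

/-- Condition (D2) with all connecting words of length exactly `p` (strong specification). -/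
def D2StrongWith (Dnm : ℕ → ℕ → ℝ) (p : ℕ) : Prop :=
  TemperedConsts Dnm ∧
  ∀ u v : List ℕ, 0 < u.length → 0 < v.length → Allow X u → Allow X v →
    ∃ w : List ℕ, w.length = p ∧ Allow X (u ++ w ++ v) ∧
      Dnm u.length v.length * (supW X f u * supW X f v) ≤ supW X f (u ++ w ++ v)

/-- Condition (D3): a finite set `W` of connecting words realizing (D2). -/
def D3With (Dnm : ℕ → ℕ → ℝ) (p : ℕ) (W : Finset (List ℕ)) : Prop :=
  TemperedConsts Dnm ∧ (∀ w ∈ W, w.length ≤ p) ∧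
  ∀ u v : List ℕ, 0 < u.length → 0 < v.length → Allow X u → Allow X v →
    ∃ w ∈ W, Allow X (u ++ w ++ v) ∧
      Dnm u.length v.length * (supW X f u * supW X f v) ≤ supW X f (u ++ w ++ v)

/-- Condition (D3). -/
def CondD3 : Prop := ∃ (Dnm : ℕ → ℕ → ℝ) (p : ℕ) (W : Finset (List ℕ)), D3With X f Dnm p W

/-- The partition function `Z_n(F)`. -/
noncomputable def Zn (n : ℕ) : ℝ≥0∞ :=
  ∑' w : {w : List ℕ // w.length = n ∧ Allow X w}, ENNReal.ofReal (supW X f w.1)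

/-- The topological pressure `P(F)`. -/
noncomputable def pressure : EReal :=
  limsup (fun n : ℕ => ((n : ℝ)⁻¹ : EReal) * ENNReal.log (Zn X f n)) atTop

/-- The Gurevich partition function `Z_n(F, a)` over periodic points starting at `a`. -/
noncomputable def ZG (a : ℕ) (n : ℕ) : ℝ≥0∞ :=
  ∑' x : {x : FullShift // x ∈ X ∧ shift^[n] x = x ∧ x 0 = a}, ENNReal.ofReal (f n x.1)

/-- The Gurevich pressure at the symbol `a`. -/
noncomputable def gurevich (a : ℕ) : EReal :=
  limsup (fun n : ℕ => ((n : ℝ)⁻¹ : EReal) * ENNReal.log (ZG X f a n)) atTop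

/-- Condition (P1) with explicit data. -/
def P1With (t : ℕ → ℕ → Prop) (l : ℕ → ℕ) (D₁ : ℝ) (p₁ : ℕ) : Prop :=
  0 < D₁ ∧ StrictMono l ∧
    ∀ n : ℕ, MatIrred t (l n) ∧ ∃ D, D₁ ≤ D ∧ ∃ p ≤ p₁, C2With (markovRestr t (l n)) f D p

/-- Condition (P1). -/
def P1 (t : ℕ → ℕ → Prop) : Prop := ∃ (l : ℕ → ℕ) (D₁ : ℝ) (p₁ : ℕ), P1With f t l D₁ p₁

/-- A `σ`-invariant Borel probability measure supported on `X`. -/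
def InvariantProb (μ : Measure FullShift) : Prop :=
  IsProbabilityMeasure μ ∧ μ X = 1 ∧ MeasurePreserving shift μ μ

/-- The entropy of the cylinder partition of length `n`. -/
noncomputable def entH (μ : Measure FullShift) (n : ℕ) : ℝ≥0∞ :=
  ∑' w : {w : List ℕ // w.length = n}, ENNReal.ofReal (Real.negMulLog (μ (cyl w.1)).toReal)

/-- The Kolmogorov–Sinai entropy of `μ` (computed along the generating cylinder partitions). -/
noncomputable def entropy (μ : Measure FullShift) : EReal :=
  limsup (fun n : ℕ => ((n : ℝ)⁻¹ : EReal) * ((entH μ n : ℝ≥0∞) : EReal)) atTop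

/-- The `EReal`-valued integral of `log g`. -/
noncomputable def elogInt (μ : Measure FullShift) (g : FullShift → ℝ) : EReal :=
  ((∫⁻ x, ENNReal.ofReal (Real.log (g x)) ∂μ : ℝ≥0∞) : EReal)
    - ((∫⁻ x, ENNReal.ofReal (-Real.log (g x)) ∂μ : ℝ≥0∞) : EReal)

/-- The averages `(1/n) ∫ log f_n dμ`. -/
noncomputable def lyapAvg (μ : Measure FullShift) (n : ℕ) : EReal :=
  ((n : ℝ)⁻¹ : EReal) * elogInt μ (f n)

/-- `lim_n (1/n) ∫ log f_n dμ = L`. -/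
def HasLyap (μ : Measure FullShift) (L : EReal) : Prop := Tendsto (lyapAvg f μ) atTop (𝓝 L)

/-- `limsup_n (1/n) ∫ log f_n dμ`. -/
noncomputable def lyapSup (μ : Measure FullShift) : EReal := limsup (lyapAvg f μ) atTop

/-- The supremum in the variational principle (limit version). -/
noncomputable def vpLim : EReal :=
  sSup {r : EReal | ∃ (μ : Measure FullShift) (L : EReal), InvariantProb X μ ∧
    HasLyap f μ L ∧ L ≠ ⊥ ∧ r = entropy μ + L}

/-- The supremum in the variational principle (limsup version). -/
noncomputable def vpLimsup : EReal :=
  sSup {r : EReal | ∃ μ : Measure FullShift, InvariantProb X μ ∧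
    lyapSup f μ ≠ ⊥ ∧ r = entropy μ + lyapSup f μ}

/-- `μ` is a Gibbs measure for the sequence `F`. -/
def IsGibbs (μ : Measure FullShift) : Prop :=
  ∃ C₀ P : ℝ, 0 < C₀ ∧ ∀ w : List ℕ, 0 < w.length → Allow X w → ∀ x ∈ X ∩ cyl w,
    ENNReal.ofReal (C₀⁻¹ * (Real.exp (-(w.length : ℝ) * P) * f w.length x)) ≤ μ (cyl w) ∧
    μ (cyl w) ≤ ENNReal.ofReal (C₀ * (Real.exp (-(w.length : ℝ) * P) * f w.length x))

/-- `μ` is an equilibrium measure for the sequence `F`. -/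
def IsEquilibrium (μ : Measure FullShift) : Prop :=
  InvariantProb X μ ∧ ∃ L : EReal, HasLyap f μ L ∧ pressure X f = entropy μ + L

/-- The `EReal`-valued sum of a real series. -/
noncomputable def esum (g : ℕ → ℝ) : EReal :=
  ((∑' i, ENNReal.ofReal (g i) : ℝ≥0∞) : EReal) - ((∑' i, ENNReal.ofReal (-g i) : ℝ≥0∞) : EReal)

/-- A sofic shift on a finite alphabet: the image of a finite-state Markov shift
under a one-block factor map. -/
def IsFinSofic (Y : Set FullShift) : Prop :=
  ∃ (s : ℕ → ℕ → Prop) (N : ℕ) (ψ : ℕ → ℕ), Y = oneBlock ψ '' markovRestr s N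

end CSS

namespace CSS

/-- The Gurevich entropy of a subshift `Z`: the supremum of the topological entropies of
the restrictions of the shift to compact invariant subsets of `Z`. -/
noncomputable def gurevichEntropy (Z : Set FullShift) : EReal :=
  sSup {h : EReal | ∃ K : Set FullShift, K ⊆ Z ∧ IsCompact K ∧ shift '' K ⊆ K ∧
    h = Dynamics.coverEntropy shift K}


lemma uc_nat (f : ℕ → ℕ) : UniformContinuous f := by
  rw [Metric.uniformContinuous_iff]
  intro ε hε
  refine ⟨1, one_pos, fun {a b} h => ?_⟩
  have hab : a = b := by
    by_contra hne
    exact absurd h (not_lt.2 (Nat.pairwise_one_le_dist hne))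
  simpa [hab] using hε

lemma uc_oneBlock (φ : ℕ → ℕ) : UniformContinuous (oneBlock φ) := by
  rw [uniformContinuous_pi]
  intro n
  exact (uc_nat φ).comp (Pi.uniformContinuous_proj _ n)

lemma semiconj_oneBlock (φ : ℕ → ℕ) : Function.Semiconj (oneBlock φ) shift shift :=
  fun x => rfl

lemma markov_closed (t : ℕ → ℕ → Prop) : IsClosed (markov t) := by
  have : markov t = ⋂ n, (fun x : FullShift => (x n, x (n + 1))) ⁻¹' {p | t p.1 p.2} := by
    ext x; simp [markov, Set.mem_iInter]
  rw [this]
  refine isClosed_iInter fun n => IsClosed.preimage ?_ ?_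
  · exact ((continuous_apply n).prodMk (continuous_apply (n + 1)))
  · exact isClosed_discrete _

/-- A one-block factor map with finite symbol fibers between topologically
mixing countable Markov shifts does not increase the Gurevich entropy: `h_G(σ_X) ≥ h_G(σ_Y)`. -/
theorem gurevichEntropy_factor (t₁ t₂ : ℕ → ℕ → Prop)
    (h₁ : NoZeroRowCol t₁) (h₂ : NoZeroRowCol t₂)
    (hmix₁ : TopMixingT t₁) (hmix₂ : TopMixingT t₂)
    (φ : ℕ → ℕ) (hsur : oneBlock φ '' markov t₁ = markov t₂)
    (hfib : ∀ i : ℕ, {j : ℕ | φ j = i}.Finite) :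
    gurevichEntropy (markov t₂) ≤ gurevichEntropy (markov t₁) := by
  apply sSup_le
  rintro h ⟨K, hKsub, hKcomp, hKinv, rfl⟩
  set K' : Set FullShift := markov t₁ ∩ oneBlock φ ⁻¹' K with hK'def
  have hSfin : ∀ n : ℕ, (⋃ i ∈ (fun x : FullShift => x n) '' K, {j : ℕ | φ j = i}).Finite := by
    intro n
    have himg : ((fun x : FullShift => x n) '' K).Finite :=
      (hKcomp.image (continuous_apply n)).finite DiscreteTopology.isDiscrete
    exact Set.Finite.biUnion himg fun i _ => hfib i
  have hK'sub : K' ⊆ Set.pi Set.univ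
      (fun n => ⋃ i ∈ (fun x : FullShift => x n) '' K, {j : ℕ | φ j = i}) := by
    rintro x ⟨hx1, hx2⟩ n _
    exact Set.mem_biUnion ⟨oneBlock φ x, hx2, rfl⟩ rfl
  have hK'closed : IsClosed K' :=
    (markov_closed t₁).inter (hKcomp.isClosed.preimage (uc_oneBlock φ).continuous)
  have hK'comp : IsCompact K' := by
    refine IsCompact.of_isClosed_subset ?_ hK'closed hK'sub
    exact isCompact_univ_pi fun n => (hSfin n).isCompact
  have hK'inv : shift '' K' ⊆ K' := by
    rintro _ ⟨x, ⟨hx1, hx2⟩, rfl⟩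
    refine ⟨fun n => hx1 (n + 1), ?_⟩
    exact hKinv ⟨oneBlock φ x, hx2, rfl⟩
  have himg : oneBlock φ '' K' = K := by
    apply Set.Subset.antisymm
    · rintro _ ⟨x, ⟨_, hx2⟩, rfl⟩; exact hx2
    · intro y hy
      obtain ⟨x, hx, hxy⟩ : y ∈ oneBlock φ '' markov t₁ := hsur ▸ hKsub hy
      exact ⟨x, ⟨hx, by rw [Set.mem_preimage, hxy]; exact hy⟩, hxy⟩
  have hle : Dynamics.coverEntropy shift K ≤ Dynamics.coverEntropy shift K' := by
    rw [← himg]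
    exact Dynamics.coverEntropy_image_le_of_uniformContinuous (semiconj_oneBlock φ)
      (uc_oneBlock φ) K'
  refine le_trans hle (le_sSup ?_)
  exact ⟨K', Set.inter_subset_left, hK'comp, hK'inv, rfl⟩

end CSS
end

section
/- Let (X, σ) be a finitely irreducible subshift on a countable alphabet and let G = {log g_n}_{n≥1} be an almost-additive sequence on X with tempered variation. Then G satisfies conditions (C1), (D2) and (D3). If moreover G is an almost-additive Bowen sequence on X, then G satisfies (C1), (C2) and (C3). -/
open Filter Topology MeasureTheory
open scoped ENNReal

namespace CSS

lemma shift_iter_apply (n : ℕ) (x : FullShift) (i : ℕ) : shift^[n] x i = x (i + n) := by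
  induction n generalizing x with
  | zero => rfl
  | succ n ih =>
    rw [Function.iterate_succ_apply, ih]
    show x (i + n + 1) = x (i + (n + 1)); ring_nf

lemma shift_iter_mem {X : Set FullShift} (hX : IsSubshift X) {x} (hx : x ∈ X) (n : ℕ) :
    shift^[n] x ∈ X := by
  induction n with
  | zero => exact hx
  | succ n ih => rw [Function.iterate_succ_apply']; exact hX.2 ⟨_, ih, rfl⟩

lemma mem_cyl_append {a b : List ℕ} {x : FullShift} (h : x ∈ cyl (a ++ b)) :
    x ∈ cyl a ∧ shift^[a.length] x ∈ cyl b := by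
  constructor
  · intro ⟨i, hi⟩
    have := h ⟨i, by simp; omega⟩
    simpa [List.get_eq_getElem, List.getElem_append_left hi] using this
  · intro ⟨i, hi⟩
    have hlt : a.length + i < (a ++ b).length := by simp; omega
    have := h ⟨a.length + i, hlt⟩
    rw [shift_iter_apply]
    simp only [List.get_eq_getElem] at this ⊢
    rw [List.getElem_append_right (by omega)] at this
    simpa [Nat.add_comm] using this

lemma agree_of_mem_cyl {w : List ℕ} {x y : FullShift} (hx : x ∈ cyl w) (hy : y ∈ cyl w) :
    ∀ i < w.length, x i = y i := by
  intro i hi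
  rw [hx ⟨i, hi⟩, hy ⟨i, hi⟩]

lemma master (X : Set FullShift) (hX : IsSubshift X) (g : ℕ → FullShift → ℝ)
    (hpos : SeqPos X g) (C : ℝ) (hC : 0 ≤ C) (hAA : AlmostAddWith X g C)
    (Mf : ℕ → ℝ) (hM : ∀ n, 0 < n → 0 < Mf n ∧ VarBddBy X g n (Mf n))
    (W : Finset (List ℕ)) (hW : ∀ w ∈ W, Allow X w)
    (hconn : ∀ u v, Allow X u → Allow X v → ∃ w ∈ W, Allow X (u ++ w ++ v)) :
    ∃ L : ℝ, 0 < L ∧ L ≤ 1 ∧ ∀ u v : List ℕ, 0 < u.length → 0 < v.length →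
      Allow X u → Allow X v → ∃ w ∈ W, Allow X (u ++ w ++ v) ∧
        Real.exp (-(2*C)) * L / (Mf u.length * Mf v.length) * (supW X g u * supW X g v)
          ≤ supW X g (u ++ w ++ v) := by
  classical
  set lb : List ℕ → ℝ := fun w =>
    if h : Allow X w ∧ 0 < w.length then g w.length h.1.choose / Mf w.length else 1 with hlb
  have hlbpos : ∀ w, 0 < lb w := by
    intro w
    simp only [hlb]
    by_cases h : Allow X w ∧ 0 < w.length
    · rw [dif_pos h]
      exact div_pos (hpos _ h.2 _ h.1.choose_spec.1) (hM _ h.2).1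
    · rw [dif_neg h]; norm_num
  have hWne : (insert ([] : List ℕ) W).Nonempty := Finset.insert_nonempty _ _
  set L : ℝ := (insert ([] : List ℕ) W).inf' hWne (fun w => min 1 (lb w)) with hLdef
  have hL0 : 0 < L := by
    rw [hLdef, Finset.lt_inf'_iff]
    intro w _
    exact lt_min one_pos (hlbpos w)
  have hL1 : L ≤ 1 := le_trans (Finset.inf'_le _ (Finset.mem_insert_self _ _)) (min_le_left _ _)
  have hLkey : ∀ w ∈ W, 0 < w.length → ∀ y ∈ X, y ∈ cyl w → L ≤ g w.length y := by
    intro w hw hwl y hyX hycyl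
    have h : Allow X w ∧ 0 < w.length := ⟨hW w hw, hwl⟩
    have h1 : L ≤ lb w :=
      le_trans (Finset.inf'_le _ (Finset.mem_insert_of_mem hw)) (min_le_right _ _)
    refine le_trans h1 ?_
    simp only [hlb]
    rw [dif_pos h]
    rw [div_le_iff₀ (hM _ h.2).1]
    have := (hM _ h.2).2 h.1.choose h.1.choose_spec.1 y hyX
      (agree_of_mem_cyl h.1.choose_spec.2 hycyl)
    linarith
  refine ⟨L, hL0, hL1, ?_⟩
  intro u v hul hvl hu hv
  obtain ⟨w, hwW, huwv⟩ := hconn u v hu hv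
  refine ⟨w, hwW, huwv, ?_⟩
  obtain ⟨x, hxX, hxcyl⟩ := huwv
  set n := u.length
  set k := w.length
  set m := v.length
  have hxu : x ∈ cyl u := (mem_cyl_append (mem_cyl_append hxcyl).1).1
  have hxw : shift^[n] x ∈ cyl w := (mem_cyl_append (mem_cyl_append hxcyl).1).2
  have hxv : shift^[n + k] x ∈ cyl v := by
    have := (mem_cyl_append hxcyl).2
    rwa [List.length_append] at this
  have hMn := hM n hul
  have hMm := hM m hvl
  set A := g n x with hA
  set B := g m (shift^[n + k] x) with hB
  have hXn : shift^[n] x ∈ X := shift_iter_mem hX hxX n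
  have hXnk : shift^[n + k] x ∈ X := shift_iter_mem hX hxX (n + k)
  have hApos : 0 < A := hpos n hul x hxX
  have hBpos : 0 < B := hpos m hvl _ hXnk
  -- upper bounds on supW
  have hbdd_u : ∀ a ∈ g n '' (X ∩ cyl u), a ≤ Mf n * A := by
    rintro a ⟨y, ⟨hyX, hycyl⟩, rfl⟩
    exact hMn.2 y hyX x hxX (agree_of_mem_cyl hycyl hxu)
  have hbdd_v : ∀ a ∈ g m '' (X ∩ cyl v), a ≤ Mf m * B := by
    rintro a ⟨y, ⟨hyX, hycyl⟩, rfl⟩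
    exact hMm.2 y hyX _ hXnk (agree_of_mem_cyl hycyl hxv)
  have hsu : supW X g u ≤ Mf n * A := csSup_le ⟨A, x, ⟨hxX, hxu⟩, rfl⟩ hbdd_u
  have hsv : supW X g v ≤ Mf m * B := csSup_le ⟨B, _, ⟨hXnk, hxv⟩, rfl⟩ hbdd_v
  have hsu0 : 0 ≤ supW X g u :=
    le_trans hApos.le (le_csSup ⟨Mf n * A, hbdd_u⟩ ⟨x, ⟨hxX, hxu⟩, rfl⟩)
  have hsv0 : 0 ≤ supW X g v :=
    le_trans hBpos.le (le_csSup ⟨Mf m * B, hbdd_v⟩ ⟨_, ⟨hXnk, hxv⟩, rfl⟩)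
  -- length of concatenation
  have hNlen : (u ++ w ++ v).length = n + (k + m) := by
    simp [List.length_append]; rfl
  have hNpos : 0 < (u ++ w ++ v).length := by omega
  -- lower bound for g at x
  have hexp2 : Real.exp (-(2*C)) = Real.exp (-C) * Real.exp (-C) := by
    rw [← Real.exp_add]; ring_nf
  have hgNx : Real.exp (-(2*C)) * L * (A * B) ≤ g (u ++ w ++ v).length x := by
    rcases Nat.eq_zero_or_pos k with hk0 | hkpos
    · -- w is empty
      have hN' : (u ++ w ++ v).length = n + m := by omega
      rw [hN']
      have h1 := (hAA n m hul hvl x hxX).1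
      have hBeq : g m (shift^[n] x) = B := by
        have hnk : n + k = n := by omega
        rw [hB, hnk]
      rw [hBeq] at h1
      have hle : Real.exp (-(2*C)) * L ≤ Real.exp (-C) := by
        calc Real.exp (-(2*C)) * L ≤ Real.exp (-(2*C)) * 1 := by
              exact mul_le_mul_of_nonneg_left hL1 (Real.exp_pos _).le
          _ = Real.exp (-(2*C)) := mul_one _
          _ ≤ Real.exp (-C) := Real.exp_le_exp.2 (by linarith)
      nlinarith [Real.exp_pos (-C), mul_pos hApos hBpos]
    · rw [hNlen]
      have h2 := (hAA n (k + m) hul (by omega) x hxX).1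
      have h1 := (hAA k m hkpos hvl (shift^[n] x) hXn).1
      have hcomp : shift^[k] (shift^[n] x) = shift^[n + k] x := by
        rw [← Function.iterate_add_apply, Nat.add_comm]
      rw [hcomp] at h1
      have hgkL : L ≤ g k (shift^[n] x) := hLkey w hwW hkpos _ hXn hxw
      calc Real.exp (-(2*C)) * L * (A * B)
          = Real.exp (-C) * (A * (Real.exp (-C) * (L * B))) := by rw [hexp2]; ring
        _ ≤ Real.exp (-C) * (A * (Real.exp (-C) * (g k (shift^[n] x) * B))) := by
            refine mul_le_mul_of_nonneg_left (mul_le_mul_of_nonneg_left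
              (mul_le_mul_of_nonneg_left ?_ (Real.exp_pos _).le) hApos.le) (Real.exp_pos _).le
            exact mul_le_mul_of_nonneg_right hgkL hBpos.le
        _ ≤ Real.exp (-C) * (A * g (k + m) (shift^[n] x)) :=
            mul_le_mul_of_nonneg_left (mul_le_mul_of_nonneg_left h1 hApos.le)
              (Real.exp_pos _).le
        _ ≤ g (n + (k + m)) x := h2
  have hbdd_w : BddAbove (g (u ++ w ++ v).length '' (X ∩ cyl (u ++ w ++ v))) := by
    refine ⟨Mf (u ++ w ++ v).length * g (u ++ w ++ v).length x, ?_⟩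
    rintro a ⟨y, ⟨hyX, hycyl⟩, rfl⟩
    exact (hM _ hNpos).2 y hyX x hxX (agree_of_mem_cyl hycyl hxcyl)
  have htop : g (u ++ w ++ v).length x ≤ supW X g (u ++ w ++ v) :=
    le_csSup hbdd_w ⟨x, ⟨hxX, hxcyl⟩, rfl⟩
  have hMn0 : Mf n ≠ 0 := hMn.1.ne'
  have hMm0 : Mf m ≠ 0 := hMm.1.ne'
  calc Real.exp (-(2*C)) * L / (Mf n * Mf m) * (supW X g u * supW X g v)
      ≤ Real.exp (-(2*C)) * L / (Mf n * Mf m) * ((Mf n * A) * (Mf m * B)) := by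
        refine mul_le_mul_of_nonneg_left ?_
          (div_nonneg (mul_nonneg (Real.exp_pos _).le hL0.le)
            (mul_nonneg hMn.1.le hMm.1.le))
        exact mul_le_mul hsu hsv hsv0 (mul_nonneg hMn.1.le hApos.le)
    _ = Real.exp (-(2*C)) * L * (A * B) := by field_simp
    _ ≤ g (u ++ w ++ v).length x := hgNx
    _ ≤ supW X g (u ++ w ++ v) := htop

end CSS

namespace CSS

/-- On a finitely irreducible subshift, an almost-additive sequence with
tempered variation satisfies (C1), (D2) and (D3); if it is moreover a Bowen sequence, it
satisfies (C1), (C2) and (C3). -/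
theorem almostAdd_satisfies_conditions (X : Set FullShift) (hX : IsSubshift X)
    (hFI : FinIrreducible X)
    (g : ℕ → FullShift → ℝ) (hpos : SeqPos X g) (hcont : SeqCont X g)
    (hAA : AlmostAdd X g) (htemp : Tempered X g) :
    (CondC1 X g ∧ CondD2 X g ∧ CondD3 X g) ∧
    (Bowen X g → CondC1 X g ∧ CondC2 X g ∧ CondC3 X g) := by
  obtain ⟨C, hC0, hAAw⟩ := hAA
  obtain ⟨Mseq, hMs, hMtend⟩ := htemp
  obtain ⟨p, W, hWp, hconn⟩ := hFI
  have hC1 : CondC1 X g := ⟨C, hC0, fun n m hn hm x hx => (hAAw n m hn hm x hx).2⟩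
  set Mf : ℕ → ℝ := fun n => if n = 0 then 1 else Mseq n with hMf
  have hMf' : ∀ n, 0 < n → 0 < Mf n ∧ VarBddBy X g n (Mf n) := by
    intro n hn
    simp only [hMf]
    rw [if_neg hn.ne']
    exact hMs n hn
  have hMfpos : ∀ n, 0 < Mf n := by
    intro n
    rcases Nat.eq_zero_or_pos n with h | h
    · simp [hMf, h]
    · exact (hMf' n h).1
  obtain ⟨L, hL0, hL1, hkey⟩ := master X hX g hpos C hC0 hAAw Mf hMf' W
    (fun w hw => (hWp w hw).2) hconn
  set Dnm : ℕ → ℕ → ℝ := fun n m =>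
    Real.exp (-(2*C) + Real.log L - Real.log (Mf n) - Real.log (Mf m)) with hDnm
  have hDeq : ∀ n m : ℕ, Dnm n m = Real.exp (-(2*C)) * L / (Mf n * Mf m) := by
    intro n m
    simp only [hDnm]
    rw [show -(2*C) + Real.log L - Real.log (Mf n) - Real.log (Mf m)
        = -(2*C) + (Real.log L + (-(Real.log (Mf n)) + -(Real.log (Mf m)))) from by ring,
      Real.exp_add, Real.exp_add, Real.exp_add, Real.exp_log hL0, Real.exp_neg (Real.log (Mf n)),
      Real.exp_neg (Real.log (Mf m)), Real.exp_log (hMfpos n), Real.exp_log (hMfpos m)]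
    field_simp
  have hlogMf : Tendsto (fun n : ℕ => Real.log (Mf n) / (n : ℝ)) atTop (𝓝 0) := by
    apply hMtend.congr'
    filter_upwards [eventually_ge_atTop 1] with n hn
    simp only [hMf]
    rw [if_neg (by omega : n ≠ 0)]
  have htend : ∀ c : ℝ, Tendsto
      (fun n : ℕ => (c - Real.log (Mf n)) / (n : ℝ)) atTop (𝓝 0) := by
    intro c
    have := (tendsto_const_div_atTop_nhds_zero_nat c).sub hlogMf
    rw [sub_zero] at this
    apply this.congr
    intro n
    rw [← sub_div]
  have htc : TemperedConsts Dnm := by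
    refine ⟨fun n m => Real.exp_pos _, fun m => ?_, fun n => ?_⟩
    · apply (htend (-(2*C) + Real.log L - Real.log (Mf m))).congr
      intro n
      simp only [hDnm, Real.log_exp]
      congr 1
      ring
    · apply (htend (-(2*C) + Real.log L - Real.log (Mf n))).congr
      intro m
      simp only [hDnm, Real.log_exp]
  have hmain : ∀ u v : List ℕ, 0 < u.length → 0 < v.length → Allow X u → Allow X v →
      ∃ w ∈ W, Allow X (u ++ w ++ v) ∧
        Dnm u.length v.length * (supW X g u * supW X g v) ≤ supW X g (u ++ w ++ v) := by
    intro u v hul hvl hu hv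
    obtain ⟨w, hwW, hA, hineq⟩ := hkey u v hul hvl hu hv
    exact ⟨w, hwW, hA, by rw [hDeq]; exact hineq⟩
  have hD3 : CondD3 X g := ⟨Dnm, p, W, htc, fun w hw => (hWp w hw).1, hmain⟩
  have hD2 : CondD2 X g := by
    refine ⟨Dnm, p, htc, fun u v hul hvl hu hv => ?_⟩
    obtain ⟨w, hwW, hA, hineq⟩ := hmain u v hul hvl hu hv
    exact ⟨w, (hWp w hwW).1, hA, hineq⟩
  refine ⟨⟨hC1, hD2, hD3⟩, ?_⟩
  rintro ⟨M, hM0, hBow⟩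
  obtain ⟨L2, hL20, hL21, hkey2⟩ := master X hX g hpos C hC0 hAAw (fun _ => M)
    (fun n hn => ⟨hM0, hBow n hn⟩) W (fun w hw => (hWp w hw).2) hconn
  have hD0 : 0 < Real.exp (-(2*C)) * L2 / (M * M) :=
    div_pos (mul_pos (Real.exp_pos _) hL20) (mul_pos hM0 hM0)
  have hmain2 : ∀ u v : List ℕ, 0 < u.length → 0 < v.length → Allow X u → Allow X v →
      ∃ w ∈ W, Allow X (u ++ w ++ v) ∧
        Real.exp (-(2*C)) * L2 / (M * M) * (supW X g u * supW X g v)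
          ≤ supW X g (u ++ w ++ v) :=
    fun u v hul hvl hu hv => hkey2 u v hul hvl hu hv
  refine ⟨hC1, ⟨_, hD0, p, fun u v hul hvl hu hv => ?_⟩,
    ⟨_, hD0, p, W, fun w hw => (hWp w hw).1, hmain2⟩⟩
  obtain ⟨w, hwW, hA, hineq⟩ := hmain2 u v hul hvl hu hv
  exact ⟨w, (hWp w hwW).1, hA, hineq⟩

end CSS
end

section
/- Let (X, σ) be an irreducible countable Markov shift and F = {log f_n}_{n≥1} a sequence on X with tempered variation satisfying (C1) and (P1). If Z_1(F) = ∞, then P(F) = ∞; moreover P(F) = P_G(F) (= ∞). -/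
open Filter Topology MeasureTheory
open scoped ENNReal

namespace CSS

set_option linter.dupNamespace false
set_option linter.unusedVariables false
variable {t : ℕ → ℕ → Prop}

lemma mem_cyl_iff {x : FullShift} {w : List ℕ} :
    x ∈ cyl w ↔ ∀ i, ∀ _ : i < w.length, x i = w[i] := by
  constructor
  · intro h i hi; exact h ⟨i, hi⟩
  · intro h i; exact h i.1 i.2

lemma mem_cyl_getD {x : FullShift} {w : List ℕ} (hx : x ∈ cyl w) {i : ℕ}
    (h : i < w.length) : x i = w.getD i 0 := by
  rw [List.getD_eq_getElem _ _ h]; exact hx ⟨i, h⟩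

lemma wordAllowed_iff {w : List ℕ} :
    WordAllowed t w ↔ ∀ i, ∀ _ : i + 1 < w.length, t w[i] w[i+1] := Iff.rfl

lemma wordAllowed_getD {w : List ℕ} (hW : WordAllowed t w) {i : ℕ}
    (h : i + 1 < w.length) : t (w.getD i 0) (w.getD (i+1) 0) := by
  rw [List.getD_eq_getElem _ _ (by omega), List.getD_eq_getElem _ _ h]
  exact hW i h

lemma shift_iter (x : FullShift) (n j : ℕ) : shift^[n] x j = x (j + n) := by
  induction n generalizing j with
  | zero => rfl
  | succ n ih =>
    rw [Function.iterate_succ_apply']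
    show shift^[n] x (j+1) = _
    rw [ih]
    congr 1
    omega

lemma markov_shift_mem {x : FullShift} (hx : x ∈ markov t) (n : ℕ) :
    shift^[n] x ∈ markov t := by
  intro j
  rw [shift_iter, shift_iter]
  simpa [Nat.add_right_comm] using hx (j + n)

/-- periodic point from a cyclable word -/
def perPt (L : List ℕ) : FullShift := fun n => L.getD (n % L.length) 0

lemma perPt_cyl {L : List ℕ} (hL : L ≠ []) : perPt L ∈ cyl L := by
  rw [mem_cyl_iff]
  intro i hi
  show L.getD (i % L.length) 0 = _
  rw [Nat.mod_eq_of_lt hi, List.getD_eq_getElem _ _ hi]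

lemma perPt_periodic (L : List ℕ) : shift^[L.length] (perPt L) = perPt L := by
  funext n
  rw [shift_iter]
  unfold perPt
  rw [Nat.add_mod_right]

lemma perPt_zero {L : List ℕ} (hL : L ≠ []) : perPt L 0 = L.head hL := by
  have hlen : 0 < L.length := List.length_pos_iff.2 hL
  show L.getD (0 % L.length) 0 = _
  rw [Nat.zero_mod, List.getD_eq_getElem _ _ hlen, ← List.getElem_zero hlen]

lemma perPt_mem_of {L : List ℕ} (hL : L ≠ []) {P : ℕ → Prop}
    (h : ∀ b ∈ L, P b) (n : ℕ) : P (perPt L n) := by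
  have hlen : 0 < L.length := List.length_pos_iff.2 hL
  have hm : n % L.length < L.length := Nat.mod_lt _ hlen
  show P (L.getD (n % L.length) 0)
  rw [List.getD_eq_getElem _ _ hm]
  exact h _ (List.getElem_mem hm)

lemma perPt_markov {L : List ℕ} (hL : L ≠ []) (hW : WordAllowed t L)
    (hwrap : t (L.getLast hL) (L.head hL)) : perPt L ∈ markov t := by
  have hlen : 0 < L.length := List.length_pos_iff.2 hL
  intro n
  show t (L.getD (n % L.length) 0) (L.getD ((n+1) % L.length) 0)
  have hmod : n % L.length < L.length := Nat.mod_lt _ hlen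
  rcases Nat.lt_or_ge (n % L.length + 1) L.length with h | h
  · have hlen2 : 1 < L.length := by omega
    have h1 : (n+1) % L.length = n % L.length + 1 := by
      rw [Nat.add_mod, Nat.mod_eq_of_lt hlen2, Nat.mod_eq_of_lt h]
    rw [h1]
    exact wordAllowed_getD hW h
  · have heq : n % L.length + 1 = L.length := by omega
    have h1 : (n+1) % L.length = 0 := by
      rcases Nat.lt_or_ge 1 L.length with h2 | h2
      · rw [Nat.add_mod, Nat.mod_eq_of_lt h2, heq, Nat.mod_self]
      · have h3 : L.length = 1 := by omega
        simp [h3, Nat.mod_one]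
    rw [h1]
    have e1 : L.getD (n % L.length) 0 = L.getLast hL := by
      rw [List.getD_eq_getElem _ _ hmod, List.getLast_eq_getElem]
      congr 1
      omega
    have e2 : L.getD 0 0 = L.head hL := by
      rw [List.getD_eq_getElem _ _ hlen, ← List.getElem_zero hlen]
    rw [e1, e2]
    exact hwrap

lemma markovRestr_subset (N : ℕ) : markovRestr t N ⊆ markov t := fun _ h => h.1

lemma markovRestr_mono {N N' : ℕ} (h : N ≤ N') : markovRestr t N ⊆ markovRestr t N' :=
  fun x hx => ⟨hx.1, fun n => lt_of_lt_of_le (hx.2 n) h⟩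

lemma allow_wordAllowed {X : Set FullShift} (hX : X ⊆ markov t) {w : List ℕ}
    (h : Allow X w) : WordAllowed t w := by
  obtain ⟨x, hxX, hxc⟩ := h
  intro i hi
  have e1 := hxc ⟨i, by omega⟩
  have e2 := hxc ⟨i+1, hi⟩
  simp only [List.get_eq_getElem] at e1 e2 ⊢
  rw [← e1, ← e2]
  exact hX hxX i

lemma allow_restr_letters {N : ℕ} {w : List ℕ} (h : Allow (markovRestr t N) w) :
    ∀ b ∈ w, b < N := by
  obtain ⟨x, hxX, hxc⟩ := h
  intro b hb
  obtain ⟨i, hi, rfl⟩ := List.mem_iff_getElem.1 hb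
  have := hxc ⟨i, hi⟩
  simp only [List.get_eq_getElem] at this
  rw [← this]
  exact hxX.2 i

lemma allow_mono {X Y : Set FullShift} (h : X ⊆ Y) {w : List ℕ} (hw : Allow X w) :
    Allow Y w := by
  obtain ⟨x, hx, hc⟩ := hw
  exact ⟨x, h hx, hc⟩

lemma wordAllowed_append_left {u v : List ℕ} (h : WordAllowed t (u ++ v)) :
    WordAllowed t u := by
  intro i hi
  have hl : i + 1 < (u ++ v).length := by simp; omega
  have := h i hl
  simp only [List.get_eq_getElem] at this ⊢
  rwa [List.getElem_append_left (by omega), List.getElem_append_left hi] at this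

lemma wordAllowed_append_right {u v : List ℕ} (h : WordAllowed t (u ++ v)) :
    WordAllowed t v := by
  intro i hi
  have hl : u.length + i + 1 < (u ++ v).length := by simp; omega
  have := h (u.length + i) hl
  simp only [List.get_eq_getElem] at this ⊢
  rw [List.getElem_append_right (by omega), List.getElem_append_right (by omega)] at this
  have e1 : u.length + i - u.length = i := by omega
  have e2 : u.length + i + 1 - u.length = i + 1 := by omega
  simp only [e1, e2] at this
  exact this

lemma wordAllowed_bridge {u v : List ℕ} (h : WordAllowed t (u ++ v))
    (h1 : u ≠ []) (h2 : v ≠ []) : t (u.getLast h1) (v.head h2) := by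
  have hu : 0 < u.length := List.length_pos_iff.2 h1
  have hv : 0 < v.length := List.length_pos_iff.2 h2
  have hl : (u.length - 1) + 1 < (u ++ v).length := by simp; omega
  have := h (u.length - 1) hl
  simp only [List.get_eq_getElem] at this
  rw [List.getElem_append_left (by omega), List.getElem_append_right (by omega)] at this
  rw [List.getLast_eq_getElem]
  have e2 : u.length - 1 + 1 - u.length = 0 := by omega
  simp only [e2] at this
  rw [List.getElem_zero hv] at this
  exact this

lemma wordAllowed_glue {u v : List ℕ} (hu : WordAllowed t u) (hv : WordAllowed t v)
    (huv : ∀ (h1 : u ≠ []) (h2 : v ≠ []), t (u.getLast h1) (v.head h2)) :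
    WordAllowed t (u ++ v) := by
  intro i hi
  simp only [List.get_eq_getElem]
  simp only [List.length_append] at hi
  rcases Nat.lt_or_ge (i+1) u.length with h | h
  · rw [List.getElem_append_left (by omega), List.getElem_append_left h]
    exact hu i h
  rcases Nat.lt_or_ge i u.length with h' | h'
  · -- i + 1 = u.length
    have hune : u ≠ [] := by intro hh; rw [hh] at h'; simp at h'
    have hvne : v ≠ [] := by
      intro hh; rw [hh] at hi; simp at hi; omega
    have hv0 : 0 < v.length := List.length_pos_iff.2 hvne
    rw [List.getElem_append_left h', List.getElem_append_right (by omega)]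
    have e1 : u[i] = u.getLast hune := by
      rw [List.getLast_eq_getElem]; congr 1; omega
    have e2 : v[i + 1 - u.length]'(by omega) = v.head hvne := by
      have : i + 1 - u.length = 0 := by omega
      simp only [this]
      rw [List.getElem_zero hv0]
    rw [e1, e2]
    exact huv hune hvne
  · rw [List.getElem_append_right h', List.getElem_append_right (by omega)]
    have e2 : i + 1 - u.length = (i - u.length) + 1 := by omega
    simp only [e2]
    exact hv _ (by omega)

/-- cyclic extension: any allowed word with letters `< N` is realized by a periodic
point of the restricted shift, provided `MatIrred t N`. -/
lemma cycExt {N : ℕ} (hirr : MatIrred t N) {u : List ℕ} (hu : u ≠ [])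
    (hlt : ∀ b ∈ u, b < N) (hW : WordAllowed t u) :
    ∃ y, y ∈ markovRestr t N ∧ y ∈ cyl u := by
  have hu0 : 0 < u.length := List.length_pos_iff.2 hu
  obtain ⟨c, hclt, hcW⟩ := hirr (u.getLast hu) (hlt _ (List.getLast_mem hu))
    (u.head hu) (hlt _ (List.head_mem hu))
  have hcW1 : WordAllowed t ([u.getLast hu] ++ (c ++ [u.head hu])) := by
    rwa [← List.append_assoc]
  have hcW2 : WordAllowed t (([u.getLast hu] ++ c) ++ [u.head hu]) := hcW
  rcases eq_or_ne c [] with rfl | hcne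
  · have hb : t (u.getLast hu) (u.head hu) := by
      have hb := wordAllowed_bridge hcW2 (by simp) (by simp)
      simpa using hb
    exact ⟨perPt u, ⟨perPt_markov hu hW hb, fun n => perPt_mem_of hu hlt n⟩, perPt_cyl hu⟩
  · have hLne : u ++ c ≠ [] := by simp [hu]
    have hLlt : ∀ b ∈ u ++ c, b < N := by
      intro b hb
      rcases List.mem_append.1 hb with h | h
      · exact hlt b h
      · exact hclt b h
    have hWL : WordAllowed t (u ++ c) := by
      apply wordAllowed_glue hW (wordAllowed_append_left (wordAllowed_append_right hcW1))
      intro h1 h2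
      have hb := wordAllowed_bridge hcW1 (by simp) (by simp)
      rw [List.head_append_of_ne_nil h2] at hb
      simpa using hb
    have hwrap : t ((u ++ c).getLast hLne) ((u ++ c).head hLne) := by
      rw [List.head_append_of_ne_nil hu]
      have hb := wordAllowed_bridge hcW2 (by simp) (by simp)
      have e : ([u.getLast hu] ++ c).getLast (by simp) = c.getLast hcne :=
        List.getLast_append_of_ne_nil _ hcne
      rw [e] at hb
      have e2 : (u ++ c).getLast hLne = c.getLast hcne := List.getLast_append_of_ne_nil _ hcne
      rw [e2]
      simpa using hb
    refine ⟨perPt (u ++ c), ⟨perPt_markov hLne hWL hwrap,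
      fun n => perPt_mem_of hLne hLlt n⟩, ?_⟩
    have hpc := perPt_cyl hLne
    rw [mem_cyl_iff] at hpc ⊢
    intro i hi
    rw [hpc i (by simp; omega)]
    rw [List.getElem_append_left hi]

variable {f : ℕ → FullShift → ℝ} {X : Set FullShift} {w : List ℕ}

lemma cyl_agree {z y : FullShift} (hz : z ∈ cyl w) (hy : y ∈ cyl w) :
    ∀ i < w.length, z i = y i := fun i hi => by
  rw [mem_cyl_iff] at hz hy; rw [hz i hi, hy i hi]

lemma supW_bddAbove (hX : X ⊆ markov t) {M : ℝ}
    (hvar : VarBddBy (markov t) f w.length M) {y : FullShift}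
    (hy : y ∈ markov t) (hyc : y ∈ cyl w) :
    BddAbove (f w.length '' (X ∩ cyl w)) := by
  refine ⟨M * f w.length y, ?_⟩
  rintro r ⟨z, ⟨hzX, hzc⟩, rfl⟩
  exact hvar z (hX hzX) y hy (cyl_agree hzc hyc)

lemma le_supW (hX : X ⊆ markov t) {M : ℝ} (hvar : VarBddBy (markov t) f w.length M)
    {z : FullShift} (hz : z ∈ X ∩ cyl w) : f w.length z ≤ supW X f w :=
  le_csSup (supW_bddAbove hX hvar (hX hz.1) hz.2) ⟨z, hz, rfl⟩

lemma supW_pos (hpos : SeqPos (markov t) f) (hX : X ⊆ markov t) (hw : 0 < w.length)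
    {M : ℝ} (hvar : VarBddBy (markov t) f w.length M)
    {z : FullShift} (hz : z ∈ X ∩ cyl w) : 0 < supW X f w :=
  lt_of_lt_of_le (hpos _ hw _ (hX hz.1)) (le_supW hX hvar hz)

lemma supW_le {B : ℝ} (hB : 0 ≤ B) (h : ∀ z ∈ X ∩ cyl w, f w.length z ≤ B) :
    supW X f w ≤ B :=
  Real.sSup_le (by rintro r ⟨z, hz, rfl⟩; exact h z hz) hB

lemma exists_ge_half_supW {z : FullShift} (hz : z ∈ X ∩ cyl w)
    (hsup : 0 < supW X f w) :
    ∃ y ∈ X ∩ cyl w, supW X f w / 2 ≤ f w.length y := by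
  obtain ⟨r, ⟨y, hy, rfl⟩, hr⟩ := exists_lt_of_lt_csSup
    (⟨_, ⟨z, hz, rfl⟩⟩ : (f w.length '' (X ∩ cyl w)).Nonempty) (half_lt_self hsup)
  exact ⟨y, hy, hr.le⟩

/-- comparison of the full sup with the restricted sup -/
lemma supW_full_le_restr (hpos : SeqPos (markov t) f) (hw : 0 < w.length) {M : ℝ}
    (hvar : VarBddBy (markov t) f w.length M) {N : ℕ} {y : FullShift}
    (hy : y ∈ markovRestr t N ∩ cyl w) :
    supW (markov t) f w ≤ M * supW (markovRestr t N) f w := by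
  have h1 : f w.length y ≤ supW (markovRestr t N) f w :=
    le_supW (markovRestr_subset N) hvar hy
  have hyfull : y ∈ markov t := (markovRestr_subset N) hy.1
  have hfy : 0 < f w.length y := hpos _ hw _ hyfull
  have hM : 0 ≤ M := by
    have := hvar y hyfull y hyfull (fun _ _ => rfl)
    nlinarith
  refine supW_le (by nlinarith) ?_
  intro z hz
  calc f w.length z ≤ M * f w.length y :=
        hvar z hz.1 y hyfull (cyl_agree hz.2 hy.2)
    _ ≤ M * supW (markovRestr t N) f w := by nlinarith

lemma shift_per_add {x : FullShift} {n : ℕ} (hp : shift^[n] x = x) (j : ℕ) :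
    x (j + n) = x j := by
  conv_rhs => rw [← hp]
  rw [shift_iter]

lemma periodic_mod {x : FullShift} {n : ℕ} (hn : 0 < n) (hp : shift^[n] x = x) (j : ℕ) :
    x j = x (j % n) := by
  induction j using Nat.strong_induction_on with
  | _ j ih =>
    rcases Nat.lt_or_ge j n with h | h
    · rw [Nat.mod_eq_of_lt h]
    · have e2 : j - n + n = j := by omega
      rw [Nat.mod_eq_sub_mod h, ← ih (j - n) (by omega)]
      conv_lhs => rw [← e2]
      exact shift_per_add hp (j - n)

lemma prefixWord_length (x : FullShift) (n : ℕ) : (prefixWord x n).length = n := by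
  simp [prefixWord]

lemma prefixWord_getElem (x : FullShift) {n i : ℕ} (h : i < (prefixWord x n).length) :
    (prefixWord x n)[i] = x i := by
  simp [prefixWord]

lemma mem_cyl_prefixWord (x : FullShift) (n : ℕ) : x ∈ cyl (prefixWord x n) := by
  rw [mem_cyl_iff]
  intro i hi
  rw [prefixWord_getElem]

lemma Zn_top_of_ZG_top {f : ℕ → FullShift → ℝ} {a n : ℕ} (hn : 0 < n) {M : ℝ}
    (hvar : VarBddBy (markov t) f n M)
    (h : ZG (markov t) f a n = ⊤) : Zn (markov t) f n = ⊤ := by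
  set X := markov t
  let i : {x : FullShift // x ∈ X ∧ shift^[n] x = x ∧ x 0 = a} →
      {w : List ℕ // w.length = n ∧ Allow X w} := fun x =>
    ⟨prefixWord x.1 n, prefixWord_length _ _, ⟨x.1, x.2.1, mem_cyl_prefixWord _ _⟩⟩
  have hinj : Function.Injective i := by
    rintro ⟨x, hx⟩ ⟨y, hy⟩ hxy
    have hpw : prefixWord x n = prefixWord y n := congrArg Subtype.val hxy
    have : x = y := by
      funext j
      have hjn : j % n < n := Nat.mod_lt _ hn
      have e1 : x (j % n) = (prefixWord x n)[j % n]'(by rw [prefixWord_length]; exact hjn) :=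
        (prefixWord_getElem _ _).symm
      have e2 : y (j % n) = (prefixWord y n)[j % n]'(by rw [prefixWord_length]; exact hjn) :=
        (prefixWord_getElem _ _).symm
      rw [periodic_mod hn hx.2.1 j, periodic_mod hn hy.2.1 j, e1, e2]
      simp [hpw]
    simp [this]
  have hle : ZG X f a n ≤ Zn X f n := by
    have step1 : ZG X f a n ≤
        ∑' x : {x : FullShift // x ∈ X ∧ shift^[n] x = x ∧ x 0 = a},
          ENNReal.ofReal (supW X f (i x).1) := by
      apply ENNReal.tsum_le_tsum
      intro x
      apply ENNReal.ofReal_le_ofReal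
      have hlen : (prefixWord x.1 n).length = n := prefixWord_length _ _
      have := le_supW (X := X) (le_refl X) (w := prefixWord x.1 n)
        (by rw [hlen]; exact hvar) ⟨x.2.1, mem_cyl_prefixWord _ _⟩
      rwa [hlen] at this
    refine step1.trans ?_
    exact ENNReal.tsum_comp_le_tsum_of_injective hinj
      (fun w => ENNReal.ofReal (supW X f w.1))
  rw [h] at hle
  exact top_le_iff.1 hle

lemma core {f : ℕ → FullShift → ℝ}
    (hpos : SeqPos (markov t) f)
    {Mseq : ℕ → ℝ} (hM : ∀ n, 0 < n → 0 < Mseq n ∧ VarBddBy (markov t) f n (Mseq n))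
    {C : ℝ} (hsub : SubAddWith (markov t) f C)
    {l : ℕ → ℕ} {D₁ : ℝ} {p₁ : ℕ} (hP : P1With f t l D₁ p₁)
    (a m : ℕ) (hm : 1 ≤ m) (hZ : Zn (markov t) f m = ⊤) :
    ∃ n, m < n ∧ ZG (markov t) f a n = ⊤ := by
  obtain ⟨hD₁, hlmono, hPk⟩ := hP
  have hak₀ : a < l (a + 1) := lt_of_lt_of_le (Nat.lt_succ_self a) hlmono.le_apply
  set k₀ := a + 1 with hk₀def
  have hWa : WordAllowed t [a] := by intro i hi; simp at hi
  obtain ⟨ya, hya, hyac⟩ := cycExt (hPk k₀).1 (u := [a]) (by simp) (by simpa using hak₀) hWa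
  set sa := f 1 ya with hsadef
  have hya_markov : ya ∈ markov t := hya.1
  have hsa : 0 < sa := hpos 1 one_pos ya hya_markov
  obtain ⟨hM1pos, hvar1⟩ := hM 1 one_pos
  obtain ⟨hMmpos, hvarm⟩ := hM m hm
  have hIocne : (Finset.Ioc m (m+1+2*p₁)).Nonempty := ⟨m+1, by simp [Finset.mem_Ioc]⟩
  set Ms := (Finset.Ioc m (m+1+2*p₁)).sup' hIocne Mseq with hMsdef
  have hMs : ∀ n, m < n → n ≤ m+1+2*p₁ → Mseq n ≤ Ms := fun n h1 h2 =>
    Finset.le_sup' _ (by simp [Finset.mem_Ioc]; omega)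
  have hMspos : 0 < Ms := lt_of_lt_of_le (hM (m+1) (by omega)).1 (hMs (m+1) (by omega) (by omega))
  have hexp : 0 < Real.exp C := Real.exp_pos C
  set cInv := (Mseq m * (2 * Real.exp C * Ms * Mseq 1)) / (D₁^2 * sa) with hcdef
  have hcInv : 0 < cInv := by
    apply div_pos
    · apply mul_pos hMmpos
      apply mul_pos (mul_pos (mul_pos two_pos hexp) hMspos) hM1pos
    · exact mul_pos (pow_pos hD₁ 2) hsa
  by_contra hcon
  push_neg at hcon
  -- all candidate ZG sums are finite
  set B : ℝ≥0∞ := ∑ n ∈ Finset.Ioc m (m+1+2*p₁), ZG (markov t) f a n with hBdef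
  have hB : B ≠ ⊤ := by
    rw [hBdef]
    rw [Ne, ENNReal.sum_eq_top]
    rintro ⟨n, hn, htop⟩
    simp [Finset.mem_Ioc] at hn
    exact hcon n hn.1 htop
  -- main estimate : each finite partial sum of `Zn m` is uniformly bounded
  have hZn : Zn (markov t) f m ≤ ENNReal.ofReal cInv * ((p₁+1) * B) := by
    rw [Zn, ENNReal.tsum_eq_iSup_sum]
    apply iSup_le
    intro s
    -- choose the level k
    set K := s.sup (fun u => u.1.sum) with hKdef
    set k := max k₀ (K + 1) with hkdef
    have hkk₀ : k₀ ≤ k := le_max_left _ _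
    have hlk : l k₀ ≤ l k := hlmono.monotone hkk₀
    have hlets : ∀ u ∈ s, ∀ b ∈ (u : {w : List ℕ // w.length = m ∧ Allow (markov t) w}).1,
        b < l k := by
      intro u hu b hb
      have h1 : b ≤ u.1.sum := List.single_le_sum (fun x _ => Nat.zero_le x) b hb
      have h2 : u.1.sum ≤ K :=
        Finset.le_sup (f := fun u : {w : List ℕ // w.length = m ∧ Allow (markov t) w} =>
          u.1.sum) hu
      have h3 : K + 1 ≤ k := le_max_right _ _
      have h4 : k ≤ l k := hlmono.le_apply
      omega
    obtain ⟨hIrr, D, hDD₁, p, hpp₁, hC2⟩ := hPk k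
    have hDpos : 0 < D := lt_of_lt_of_le hD₁ hDD₁
    have hak : a < l k := lt_of_lt_of_le hak₀ hlk
    have hya_restr : ya ∈ markovRestr t (l k) := markovRestr_mono hlk hya
    have hAllowa : Allow (markovRestr t (l k)) [a] := ⟨ya, hya_restr, hyac⟩
    have hSa : sa ≤ supW (markovRestr t (l k)) f [a] :=
      le_supW (markovRestr_subset _) hvar1 ⟨hya_restr, hyac⟩
    have hSa_pos : 0 < supW (markovRestr t (l k)) f [a] := lt_of_lt_of_le hsa hSa
    -- per-word construction
    have main : ∀ u : {w : List ℕ // w.length = m ∧ Allow (markov t) w}, u ∈ s →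
        ∃ (j n : ℕ) (x : FullShift),
          m < n ∧ n ≤ m + 1 + 2*p₁ ∧ j ≤ p₁ ∧
          x ∈ markov t ∧ shift^[n] x = x ∧ x 0 = a ∧
          (∀ i, ∀ hi : i < m, x (1 + j + i) = u.1[i]'(by rw [u.2.1]; exact hi)) ∧
          supW (markov t) f u.1 ≤ cInv * f n x := by
      rintro ⟨w, hwlen, hwallow⟩ hu
      have hwne : w ≠ [] := by
        intro h; rw [h] at hwlen; simp at hwlen; omega
      have hWu : WordAllowed t w := allow_wordAllowed (fun z hz => hz) hwallow
      have hlet : ∀ b ∈ w, b < l k := hlets ⟨w, hwlen, hwallow⟩ hu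
      obtain ⟨yu, hyu, hyuc⟩ := cycExt hIrr hwne hlet hWu
      have hAllowu : Allow (markovRestr t (l k)) w := ⟨yu, hyu, hyuc⟩
      obtain ⟨w₁, hw₁p, hA₁allow, hA₁sup⟩ := hC2 [a] w (by simp)
        (by rw [hwlen]; omega) hAllowa hAllowu
      obtain ⟨w₂, hw₂p, hA₂allow, hA₂sup⟩ := hC2 ([a] ++ w₁ ++ w) [a]
        (by simp) (by simp) hA₁allow hAllowa
      have hLne : ([a] ++ w₁ ++ w ++ w₂) ≠ [] := by simp
      have hLhead : ([a] ++ w₁ ++ w ++ w₂).head hLne = a := by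
        rw [List.head_append_of_ne_nil (by simp), List.head_append_of_ne_nil (by simp),
          List.head_append_of_ne_nil (by simp)]
        rfl
      have hgetw : ∀ i, ∀ hi : i < m,
          ([a] ++ w₁ ++ w ++ w₂)[1 + w₁.length + i]'(by simp [hwlen]; omega) =
            w[i]'(hwlen ▸ hi) := by
        intro i hi
        rw [List.getElem_append_left (show 1 + w₁.length + i < ([a] ++ w₁ ++ w).length by
          simp [hwlen]; omega)]
        rw [List.getElem_append_right (show ([a] ++ w₁).length ≤ 1 + w₁.length + i by
          simp; omega)]
        have e4 : 1 + w₁.length + i - ([a] ++ w₁).length = i := by simp; omega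
        simp only [e4]
      set L := [a] ++ w₁ ++ w ++ w₂ with hLdef
      set n := L.length with hndef
      have hLlen : n = 1 + w₁.length + m + w₂.length := by
        rw [hndef, hLdef]
        simp [List.length_append, hwlen]
        omega
      have hwp1 : w₁.length ≤ p₁ := le_trans hw₁p hpp₁
      have hwp2 : w₂.length ≤ p₁ := le_trans hw₂p hpp₁
      -- the periodic point
      have hWA₂ : WordAllowed t (L ++ [a]) := allow_wordAllowed (markovRestr_subset _) hA₂allow
      have hWL : WordAllowed t L := wordAllowed_append_left hWA₂
      have hwrap : t (L.getLast hLne) (L.head hLne) := by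
        have hb := wordAllowed_bridge hWA₂ hLne (by simp)
        rw [hLhead]
        simpa using hb
      set x := perPt L with hxdef
      have hx_markov : x ∈ markov t := perPt_markov hLne hWL hwrap
      have hx_per : shift^[n] x = x := perPt_periodic L
      have hx0 : x 0 = a := by rw [hxdef, perPt_zero hLne, hLhead]
      have hxcyl : x ∈ cyl L := perPt_cyl hLne
      have hrec : ∀ i, ∀ hi : i < m, x (1 + w₁.length + i) = w[i]'(hwlen ▸ hi) := by
        intro i hi
        have hidx : 1 + w₁.length + i < L.length := by omega
        have e1 : x (1+w₁.length+i) = L[1+w₁.length+i]'hidx := (mem_cyl_iff.1 hxcyl) _ hidx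
        rw [e1]
        exact hgetw i hi
      -- analytic estimate
      have hSrw_pos : 0 < supW (markovRestr t (l k)) f w :=
        supW_pos hpos (markovRestr_subset _) (by rw [hwlen]; omega)
          (by rw [hwlen]; exact hvarm) ⟨hyu, hyuc⟩
      have hSfull_le : supW (markov t) f w ≤ Mseq m * supW (markovRestr t (l k)) f w := by
        have := supW_full_le_restr hpos (w := w) (by rw [hwlen]; omega) (M := Mseq m)
          (by rw [hwlen]; exact hvarm) ⟨hyu, hyuc⟩
        exact this
      set Srw := supW (markovRestr t (l k)) f w with hSrwdef
      set Sa := supW (markovRestr t (l k)) f [a] with hSadef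
      have hS1 : D₁ * (sa * Srw) ≤ supW (markovRestr t (l k)) f ([a] ++ w₁ ++ w) := by
        refine le_trans ?_ hA₁sup
        calc D₁ * (sa * Srw) ≤ D * (sa * Srw) :=
              mul_le_mul_of_nonneg_right hDD₁ (mul_nonneg hsa.le hSrw_pos.le)
          _ ≤ D * (Sa * Srw) := by
              apply mul_le_mul_of_nonneg_left _ hDpos.le
              exact mul_le_mul_of_nonneg_right hSa hSrw_pos.le
      have hS1pos : 0 < supW (markovRestr t (l k)) f ([a] ++ w₁ ++ w) :=
        lt_of_lt_of_le (mul_pos hD₁ (mul_pos hsa hSrw_pos)) hS1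
      have hS2 : D₁ * ((D₁ * (sa * Srw)) * sa) ≤ supW (markovRestr t (l k)) f (L ++ [a]) := by
        refine le_trans ?_ hA₂sup
        calc D₁ * ((D₁ * (sa * Srw)) * sa)
            ≤ D * ((D₁ * (sa * Srw)) * sa) := mul_le_mul_of_nonneg_right hDD₁
              (mul_nonneg (mul_nonneg hD₁.le (mul_nonneg hsa.le hSrw_pos.le)) hsa.le)
          _ ≤ D * (supW (markovRestr t (l k)) f ([a] ++ w₁ ++ w) * Sa) := by
              apply mul_le_mul_of_nonneg_left _ hDpos.le
              exact mul_le_mul hS1 hSa hsa.le hS1pos.le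
      have hS2pos : 0 < supW (markovRestr t (l k)) f (L ++ [a]) :=
        lt_of_lt_of_le (mul_pos hD₁ (mul_pos (mul_pos hD₁ (mul_pos hsa hSrw_pos)) hsa)) hS2
      have hlenA₂ : (L ++ [a]).length = n + 1 := by simp [hndef]
      obtain ⟨z, hz1, hz2⟩ := hA₂allow
      have hfx_pos : 0 < f n x := hpos n (by omega) x hx_markov
      obtain ⟨hMnpos, hvarn⟩ := hM n (by omega)
      have hS2top : supW (markovRestr t (l k)) f (L ++ [a]) ≤
          2 * (Real.exp C * ((Mseq n * f n x) * (Mseq 1 * sa))) := by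
        obtain ⟨y, hy, hyhalf⟩ := exists_ge_half_supW ⟨hz1, hz2⟩ hS2pos
        rw [hlenA₂] at hyhalf
        have hy_markov : y ∈ markov t := markovRestr_subset _ hy.1
        have hsubA := hsub n 1 (by omega) one_pos y hy_markov
        have hagree : ∀ i < n, y i = x i := by
          intro i hi
          have h1 : y i = (L ++ [a])[i]'(by rw [hlenA₂]; omega) :=
            (mem_cyl_iff.1 hy.2) i (by rw [hlenA₂]; omega)
          have h2 : (L ++ [a])[i]'(by rw [hlenA₂]; omega) = L[i]'hi :=
            List.getElem_append_left hi
          rw [h1, h2]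
          exact ((mem_cyl_iff.1 hxcyl) i hi).symm
        have hfny : f n y ≤ Mseq n * f n x := hvarn y hy_markov x hx_markov hagree
        have hshift_mem : shift^[n] y ∈ markov t := markov_shift_mem hy_markov n
        have hyn : (shift^[n] y) 0 = a := by
          rw [shift_iter]
          have h0 : (0 : ℕ) + n = n := by omega
          rw [h0]
          have h1 : y n = (L ++ [a])[n]'(by rw [hlenA₂]; omega) :=
            (mem_cyl_iff.1 hy.2) n (by rw [hlenA₂]; omega)
          rw [h1, List.getElem_append_right (by omega)]
          simp
        have hya0 : ya 0 = a := by
          have := (mem_cyl_iff.1 hyac) 0 (by simp)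
          simpa using this
        have hf1 : f 1 (shift^[n] y) ≤ Mseq 1 * sa := by
          apply hvar1 _ hshift_mem ya hya_markov
          intro i hi
          have : i = 0 := by omega
          rw [this, hyn, hya0]
        have hfny_pos : 0 < f n y := hpos n (by omega) y hy_markov
        have hf1y_pos : 0 < f 1 (shift^[n] y) := hpos 1 one_pos _ hshift_mem
        have hprod : f n y * f 1 (shift^[n] y) ≤ (Mseq n * f n x) * (Mseq 1 * sa) :=
          mul_le_mul hfny hf1 hf1y_pos.le (by positivity)
        calc supW (markovRestr t (l k)) f (L ++ [a]) ≤ 2 * f (n+1) y := by linarith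
          _ ≤ 2 * (Real.exp C * (f n y * f 1 (shift^[n] y))) := by linarith
          _ ≤ 2 * (Real.exp C * ((Mseq n * f n x) * (Mseq 1 * sa))) := by
              have := mul_le_mul_of_nonneg_left hprod hexp.le
              linarith
      have hMsn : Mseq n ≤ Ms := hMs n (by omega) (by omega)
      -- combine everything
      refine ⟨w₁.length, n, x, by omega, by omega, hwp1, hx_markov, hx_per, hx0, hrec, ?_⟩
      have key0 : (D₁^2 * sa * Srw) * sa ≤ ((2 * Real.exp C * Mseq n * Mseq 1) * f n x) * sa := by
        calc (D₁^2 * sa * Srw) * sa = D₁ * ((D₁ * (sa * Srw)) * sa) := by ring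
          _ ≤ supW (markovRestr t (l k)) f (L ++ [a]) := hS2
          _ ≤ 2 * (Real.exp C * ((Mseq n * f n x) * (Mseq 1 * sa))) := hS2top
          _ = ((2 * Real.exp C * Mseq n * Mseq 1) * f n x) * sa := by ring
      have key1 : D₁^2 * sa * Srw ≤ (2 * Real.exp C * Mseq n * Mseq 1) * f n x :=
        le_of_mul_le_mul_right key0 hsa
      have key2 : D₁^2 * sa * Srw ≤ (2 * Real.exp C * Ms * Mseq 1) * f n x := by
        refine key1.trans ?_
        have h1 : 2 * Real.exp C * Mseq n * Mseq 1 ≤ 2 * Real.exp C * Ms * Mseq 1 := by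
          apply mul_le_mul_of_nonneg_right _ hM1pos.le
          apply mul_le_mul_of_nonneg_left hMsn (by positivity)
        exact mul_le_mul_of_nonneg_right h1 hfx_pos.le
      show supW (markov t) f w ≤ cInv * f n x
      rw [hcdef, div_mul_eq_mul_div, le_div_iff₀ (mul_pos (pow_pos hD₁ 2) hsa)]
      calc supW (markov t) f w * (D₁^2 * sa)
          ≤ (Mseq m * Srw) * (D₁^2 * sa) := by
            apply mul_le_mul_of_nonneg_right hSfull_le (by positivity)
        _ = Mseq m * (D₁^2 * sa * Srw) := by ring
        _ ≤ Mseq m * ((2 * Real.exp C * Ms * Mseq 1) * f n x) :=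
            mul_le_mul_of_nonneg_left key2 hMmpos.le
        _ = Mseq m * (2 * Real.exp C * Ms * Mseq 1) * f n x := by ring
    classical
    have hmain' : ∀ u : ↥s, ∃ (j n : ℕ) (x : FullShift),
        m < n ∧ n ≤ m + 1 + 2*p₁ ∧ j ≤ p₁ ∧
        x ∈ markov t ∧ shift^[n] x = x ∧ x 0 = a ∧
        (∀ i, ∀ hi : i < m, x (1 + j + i) = u.1.1[i]'(by rw [u.1.2.1]; exact hi)) ∧
        supW (markov t) f u.1.1 ≤ cInv * f n x := fun u => main u.1 u.2
    choose jf nf xf hn1 hn2 hjp hxm hxper hx0 hrecf hbound using hmain'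
    calc ∑ w ∈ s, ENNReal.ofReal (supW (markov t) f w.1)
        = ∑ u ∈ s.attach, ENNReal.ofReal (supW (markov t) f u.1.1) :=
          (Finset.sum_attach _ _).symm
      _ ≤ ∑ u ∈ s.attach, ENNReal.ofReal cInv * ENNReal.ofReal (f (nf u) (xf u)) := by
          apply Finset.sum_le_sum
          intro u _
          rw [← ENNReal.ofReal_mul hcInv.le]
          exact ENNReal.ofReal_le_ofReal (hbound u)
      _ = ENNReal.ofReal cInv * ∑ u ∈ s.attach, ENNReal.ofReal (f (nf u) (xf u)) :=
          (Finset.mul_sum _ _ _).symm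
      _ ≤ ENNReal.ofReal cInv * ((p₁ + 1) * B) := by
          apply mul_le_mul_right
          rw [← Finset.sum_fiberwise_of_maps_to (g := nf) (t := Finset.Ioc m (m+1+2*p₁))
            (fun u _ => Finset.mem_Ioc.2 ⟨hn1 u, hn2 u⟩)
            (fun u => ENNReal.ofReal (f (nf u) (xf u)))]
          rw [hBdef, Finset.mul_sum]
          apply Finset.sum_le_sum
          intro ν hν
          have hcongr : ∀ u ∈ s.attach.filter (fun u => nf u = ν),
              ENNReal.ofReal (f (nf u) (xf u)) = ENNReal.ofReal (f ν (xf u)) := by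
            intro u hu
            rw [(Finset.mem_filter.1 hu).2]
          rw [Finset.sum_congr rfl hcongr]
          set s' := s.attach.filter (fun u => nf u = ν) with hs'def
          rw [Finset.sum_comp (fun y => ENNReal.ofReal (f ν y)) xf]
          set img := s'.image xf with himgdef
          have hcard : ∀ y ∈ img, ((s'.filter (fun u => xf u = y)).card : ℝ≥0∞) ≤ p₁ + 1 := by
            intro y hy
            have hc : (s'.filter (fun u => xf u = y)).card ≤ (Finset.range (p₁+1)).card := by
              apply Finset.card_le_card_of_injOn (fun u => jf u)
              · intro u hu
                simp only [Finset.coe_range, Set.mem_Iio]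
                exact Nat.lt_succ_of_le (hjp u)
              · intro u hu v hv hj
                simp only [Finset.coe_filter, Set.mem_setOf_eq, hs'def, Finset.mem_filter]
                  at hu hv
                have hxequv : xf u = xf v := by rw [hu.2, hv.2]
                have hlw : u.1.1 = v.1.1 := by
                  apply List.ext_getElem (by rw [u.1.2.1, v.1.2.1])
                  intro i h1 h2
                  have hi : i < m := by rw [← u.1.2.1]; exact h1
                  have hj' : jf u = jf v := hj
                  rw [← hrecf u i hi, ← hrecf v i hi, hj', hxequv]
                exact Subtype.ext (Subtype.ext hlw)
            rw [Finset.card_range] at hc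
            calc ((s'.filter (fun u => xf u = y)).card : ℝ≥0∞)
                ≤ ((p₁ + 1 : ℕ) : ℝ≥0∞) := Nat.cast_le.2 hc
              _ = (p₁ : ℝ≥0∞) + 1 := by push_cast; ring
          calc ∑ y ∈ img, (s'.filter (fun u => xf u = y)).card • ENNReal.ofReal (f ν y)
              ≤ ∑ y ∈ img, ((p₁ : ℝ≥0∞) + 1) * ENNReal.ofReal (f ν y) := by
                apply Finset.sum_le_sum
                intro y hy
                rw [nsmul_eq_mul]
                exact mul_le_mul_left (hcard y hy) _
            _ = ((p₁ : ℝ≥0∞) + 1) * ∑ y ∈ img, ENNReal.ofReal (f ν y) :=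
                (Finset.mul_sum _ _ _).symm
            _ ≤ (p₁ + 1) * ZG (markov t) f a ν := by
                apply mul_le_mul_right
                have hP : ∀ y ∈ img, y ∈ markov t ∧ shift^[ν] y = y ∧ y 0 = a := by
                  intro y hy
                  obtain ⟨u, hu, rfl⟩ := Finset.mem_image.1 hy
                  have hnu : nf u = ν := by
                    have := Finset.mem_filter.1 hu
                    exact this.2
                  exact ⟨hxm u, by rw [← hnu]; exact hxper u, hx0 u⟩
                rw [ZG]
                have hinj2 : ∀ y ∈ img.attach, ∀ z ∈ img.attach,
                    (⟨y.1, hP y.1 y.2⟩ : {x : FullShift // x ∈ markov t ∧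
                      shift^[ν] x = x ∧ x 0 = a}) = ⟨z.1, hP z.1 z.2⟩ → y = z := by
                  intro y _ z _ h
                  exact Subtype.ext (congrArg
                    (fun w : {x : FullShift // x ∈ markov t ∧ shift^[ν] x = x ∧ x 0 = a} =>
                      w.1) h)
                have heq := Finset.sum_image (s := img.attach)
                  (f := fun z : {x : FullShift // x ∈ markov t ∧ shift^[ν] x = x ∧ x 0 = a} =>
                    ENNReal.ofReal (f ν z.1)) hinj2
                calc ∑ y ∈ img, ENNReal.ofReal (f ν y)
                    = ∑ y ∈ img.attach, ENNReal.ofReal (f ν y.1) :=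
                      (Finset.sum_attach _ _).symm
                  _ = ∑ z ∈ img.attach.image (fun y => (⟨y.1, hP y.1 y.2⟩ :
                      {x : FullShift // x ∈ markov t ∧ shift^[ν] x = x ∧ x 0 = a})),
                      ENNReal.ofReal (f ν z.1) := heq.symm
                  _ ≤ _ := ENNReal.sum_le_tsum _
  rw [hZ] at hZn
  have hfin : ENNReal.ofReal cInv * ((p₁+1) * B) ≠ ⊤ := by
    apply ENNReal.mul_ne_top ENNReal.ofReal_ne_top
    apply ENNReal.mul_ne_top _ hB
    simp
  exact hfin (top_le_iff.1 hZn)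

lemma limsup_top_of_freq_top {g : ℕ → ℝ≥0∞}
    (hg : ∀ N : ℕ, ∃ n, N ≤ n ∧ 1 ≤ n ∧ g n = ⊤) :
    Filter.limsup (fun n : ℕ => ((n : ℝ)⁻¹ : EReal) * ENNReal.log (g n)) Filter.atTop
      = (⊤ : EReal) := by
  apply le_antisymm le_top
  rw [Filter.limsup_eq_iInf_iSup_of_nat]
  refine le_iInf fun N => ?_
  obtain ⟨n, hNn, hn1, hgn⟩ := hg N
  have htop : ((n : ℝ)⁻¹ : EReal) * ENNReal.log (g n) = ⊤ := by
    rw [hgn, ENNReal.log_top]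
    apply EReal.mul_top_of_pos
    apply EReal.coe_pos.2
    have hn : (0:ℝ) < n := by exact_mod_cast hn1
    positivity
  calc (⊤ : EReal) = ((n : ℝ)⁻¹ : EReal) * ENNReal.log (g n) := htop.symm
    _ ≤ ⨆ i, ⨆ _ : i ≥ N, ((i : ℝ)⁻¹ : EReal) * ENNReal.log (g i) :=
        le_iSup₂ (f := fun i (_ : i ≥ N) => ((i : ℝ)⁻¹ : EReal) * ENNReal.log (g i)) n hNn

/-- For a sequence with tempered variation satisfying (C1) and (P1) on an
irreducible countable Markov shift, `Z₁(F) = ∞` forces `P(F) = ∞`, and then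
`P(F) = P_G(F) = ∞`. -/
theorem pressure_top_of_Z1_top (t : ℕ → ℕ → Prop) (h0 : NoZeroRowCol t)
    (hirr : Irreducible (markov t))
    (f : ℕ → FullShift → ℝ) (hpos : SeqPos (markov t) f) (hcont : SeqCont (markov t) f)
    (htemp : Tempered (markov t) f) (hC1 : CondC1 (markov t) f) (hP1 : P1 f t)
    (hZ1 : Zn (markov t) f 1 = ⊤) :
    pressure (markov t) f = ⊤ ∧ ∀ a : ℕ, gurevich (markov t) f a = pressure (markov t) f := by
  obtain ⟨Mseq, hM, -⟩ := htemp
  obtain ⟨C, -, hsub⟩ := hC1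
  obtain ⟨l, D₁, p₁, hP⟩ := hP1
  have step : ∀ a n, 1 ≤ n → Zn (markov t) f n = ⊤ →
      ∃ n', n < n' ∧ Zn (markov t) f n' = ⊤ ∧ ZG (markov t) f a n' = ⊤ := by
    intro a n hn hZ
    obtain ⟨n', hlt, hZG⟩ := core hpos hM hsub hP a n hn hZ
    exact ⟨n', hlt, Zn_top_of_ZG_top (by omega) (hM n' (by omega)).2 hZG, hZG⟩
  have iter : ∀ a N, ∃ n, N < n ∧ Zn (markov t) f n = ⊤ ∧ ZG (markov t) f a n = ⊤ := by
    intro a N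
    induction N with
    | zero =>
      obtain ⟨n', h1, h2, h3⟩ := step a 1 le_rfl hZ1
      exact ⟨n', by omega, h2, h3⟩
    | succ N ih =>
      obtain ⟨n, hn, hZn, _⟩ := ih
      obtain ⟨n', h1, h2, h3⟩ := step a n (by omega) hZn
      exact ⟨n', by omega, h2, h3⟩
  have ptop : pressure (markov t) f = ⊤ := by
    rw [pressure]
    apply limsup_top_of_freq_top
    intro N
    obtain ⟨n, h1, h2, -⟩ := iter 0 N
    exact ⟨n, by omega, by omega, h2⟩
  refine ⟨ptop, fun a => ?_⟩
  rw [ptop, gurevich]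
  apply limsup_top_of_freq_top
  intro N
  obtain ⟨n, h1, -, h3⟩ := iter a N
  exact ⟨n, by omega, by omega, h3⟩


end CSS
end
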